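/- Let (f_j)_{j≥0} be the generating functions defined by f₀ and the recursion f_j' + f_j''' − f_j⁽⁵⁾ = −f_{j−1} with vanishing data at 0 up to fourth order (j ≥ 1). Then |f_j(x)| ≤ 2^j |x|^{5j+1} / (5j+1)! for all j ≥ 0 and x ∈ [−1,0]. -/

import Mathlib

noncomputable def aK : ℝ := (Real.sqrt 5 + 1) / 2
noncomputable def bK : ℝ := (Real.sqrt 5 - 1) / 2

noncomputable def f₀ : ℝ → ℝ := fun x =>
  1 / (Real.sqrt aK * (aK + bK)) * Real.sinh (Real.sqrt aK * x)
    - 1 / (Real.sqrt bK * (aK + bK)) * Real.sin (Real.sqrt bK * x)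

noncomputable def g₀ : ℝ → ℝ := fun x =>
  1 / (aK * (aK + bK)) * Real.cosh (Real.sqrt aK * x)
    + 1 / (bK * (aK + bK)) * Real.cos (Real.sqrt bK * x)
    - 1 / (aK * (aK + bK)) - 1 / (bK * (aK + bK))

/-! ### Auxiliary lemmas -/

lemma step_int (w : ℝ → ℝ) (hw : Differentiable ℝ w) (hw' : Continuous (deriv w))
    (h0 : w 0 = 0) {D E : ℝ} (k l : ℕ) {x : ℝ}
    (hx : x ≤ 0)
    (hb : ∀ s ∈ Set.Icc x 0, |deriv w s| ≤
      D * (-s) ^ k / (Nat.factorial k) + E * (-s) ^ l / (Nat.factorial l)) :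
    |w x| ≤ D * (-x) ^ (k + 1) / (Nat.factorial (k + 1))
      + E * (-x) ^ (l + 1) / (Nat.factorial (l + 1)) := by
  have hint : IntervalIntegrable (deriv w) MeasureTheory.volume x 0 :=
    hw'.intervalIntegrable _ _
  have hsub : (∫ s in x..(0:ℝ), deriv w s) = w 0 - w x :=
    intervalIntegral.integral_deriv_eq_sub (fun y _ => hw y) hint
  have hwx : |w x| = |∫ s in x..(0:ℝ), deriv w s| := by
    rw [hsub, h0, zero_sub, abs_neg]
  have hpow : ∀ n : ℕ, (∫ s in x..(0:ℝ), (-s) ^ n) = (-x) ^ (n + 1) / (n + 1) := by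
    intro n
    rw [intervalIntegral.integral_comp_neg (fun s => s ^ n)]
    simp [integral_pow]
  have hcont : Continuous fun s : ℝ =>
      D * (-s) ^ k / (Nat.factorial k) + E * (-s) ^ l / (Nat.factorial l) := by
    fun_prop
  have habs : |∫ s in x..(0:ℝ), deriv w s| ≤ ∫ s in x..(0:ℝ), |deriv w s| :=
    intervalIntegral.abs_integral_le_integral_abs hx
  have hmono : (∫ s in x..(0:ℝ), |deriv w s|) ≤
      ∫ s in x..(0:ℝ), (D * (-s) ^ k / (Nat.factorial k) + E * (-s) ^ l / (Nat.factorial l)) := by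
    apply intervalIntegral.integral_mono_on hx (hw'.abs.intervalIntegrable _ _)
      (hcont.intervalIntegrable _ _) hb
  have hval : (∫ s in x..(0:ℝ), (D * (-s) ^ k / (Nat.factorial k) + E * (-s) ^ l / (Nat.factorial l)))
      = D * (-x) ^ (k + 1) / (Nat.factorial (k + 1)) + E * (-x) ^ (l + 1) / (Nat.factorial (l + 1)) := by
    have h1 : ∀ (c : ℝ) (n : ℕ), (∫ s in x..(0:ℝ), c * (-s) ^ n / (Nat.factorial n))
        = c * (-x) ^ (n + 1) / (Nat.factorial (n + 1)) := by
      intro c n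
      have : (fun s : ℝ => c * (-s) ^ n / (Nat.factorial n))
          = fun s : ℝ => (c / (Nat.factorial n)) * (-s) ^ n := by
        funext s; ring
      rw [this, intervalIntegral.integral_const_mul, hpow, Nat.factorial_succ,
        div_mul_div_comm, mul_comm ((Nat.factorial n : ℝ))]
      push_cast
      ring
    rw [intervalIntegral.integral_add, h1, h1]
    · exact Continuous.intervalIntegrable (by fun_prop) _ _
    · exact Continuous.intervalIntegrable (by fun_prop) _ _
  rw [hwx]
  calc |∫ s in x..(0:ℝ), deriv w s| ≤ _ := habs
    _ ≤ _ := hmono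
    _ = _ := hval

lemma iteratedDeriv_iteratedDeriv (n k : ℕ) (w : ℝ → ℝ) :
    iteratedDeriv n (iteratedDeriv k w) = iteratedDeriv (n + k) w := by
  induction k generalizing w with
  | zero => simp
  | succ k ih =>
    have h2 : n + (k + 1) = (n + k) + 1 := by omega
    rw [h2, iteratedDeriv_succ', iteratedDeriv_succ', ih]

lemma contDiff_top_iteratedDeriv (k : ℕ) (w : ℝ → ℝ) (hw : ContDiff ℝ (⊤ : ℕ∞) w) :
    ContDiff ℝ (⊤ : ℕ∞) (iteratedDeriv k w) := by
  induction k with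
  | zero => simpa using hw
  | succ k ih =>
    rw [iteratedDeriv_succ]
    exact (contDiff_infty_iff_deriv.mp ih).2

lemma iter_step (n : ℕ) : ∀ (w : ℝ → ℝ), ContDiff ℝ (⊤ : ℕ∞) w →
    (∀ k < n, iteratedDeriv k w 0 = 0) →
    ∀ (D E : ℝ) (k l : ℕ),
    (∀ s ∈ Set.Icc (-1:ℝ) 0, |iteratedDeriv n w s| ≤
      D * (-s) ^ k / (Nat.factorial k) + E * (-s) ^ l / (Nat.factorial l)) →
    ∀ x ∈ Set.Icc (-1:ℝ) 0, |w x| ≤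
      D * (-x) ^ (k + n) / (Nat.factorial (k + n)) + E * (-x) ^ (l + n) / (Nat.factorial (l + n)) := by
  induction n with
  | zero => intro w _ _ D E k l hb x hx; simpa using hb x hx
  | succ n ih =>
    intro w hw h0 D E k l hb x hx
    have hdw : ContDiff ℝ (⊤ : ℕ∞) (deriv w) := (contDiff_infty_iff_deriv.mp hw).2
    have hder : ∀ s ∈ Set.Icc x 0, |deriv w s| ≤
        D * (-s) ^ (k + n) / (Nat.factorial (k + n)) + E * (-s) ^ (l + n) / (Nat.factorial (l + n)) := by
      intro s hs
      refine ih (deriv w) hdw ?_ D E k l ?_ s ⟨le_trans hx.1 hs.1, hs.2⟩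
      · intro k' hk'
        rw [← iteratedDeriv_one, iteratedDeriv_iteratedDeriv]
        exact h0 (k' + 1) (by omega)
      · intro s' hs'
        rw [← iteratedDeriv_one, iteratedDeriv_iteratedDeriv]
        exact hb s' hs'
    exact step_int w (hw.differentiable (by simp)) hdw.continuous
      (h0 0 (by omega)) (k + n) (l + n) hx.2 hder

/-! ### Properties of `f₀` -/

lemma sq5 : (Real.sqrt 5) ^ 2 = 5 := Real.sq_sqrt (by norm_num)

lemma s5_gt : (2.236 : ℝ) < Real.sqrt 5 := by
  nlinarith [sq5, Real.sqrt_nonneg 5]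

lemma s5_lt : Real.sqrt 5 < 2.2361 := by
  nlinarith [sq5, Real.sqrt_nonneg 5]

lemma aK_pos : 0 < aK := by unfold aK; nlinarith [s5_gt]
lemma bK_pos : 0 < bK := by unfold bK; nlinarith [s5_gt]
lemma aK_le : aK ≤ 1.62 := by unfold aK; nlinarith [s5_lt]
lemma bK_le : bK ≤ 0.62 := by unfold bK; nlinarith [s5_lt]
lemma abK : aK + bK = Real.sqrt 5 := by unfold aK bK; ring

lemma sqrt_aK_le : Real.sqrt aK ≤ 1.28 := by
  have h : aK ≤ (1.28 : ℝ) ^ 2 := by nlinarith [aK_le]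
  calc Real.sqrt aK ≤ Real.sqrt ((1.28:ℝ)^2) := Real.sqrt_le_sqrt h
    _ = 1.28 := Real.sqrt_sq (by norm_num)

lemma f0_hasDeriv (x : ℝ) : HasDerivAt f₀
    ((Real.cosh (Real.sqrt aK * x) - Real.cos (Real.sqrt bK * x)) / Real.sqrt 5) x := by
  have ha : HasDerivAt (fun y : ℝ => Real.sqrt aK * y) (Real.sqrt aK) x := by
    simpa using (hasDerivAt_id x).const_mul (Real.sqrt aK)
  have hb : HasDerivAt (fun y : ℝ => Real.sqrt bK * y) (Real.sqrt bK) x := by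
    simpa using (hasDerivAt_id x).const_mul (Real.sqrt bK)
  have h1 : HasDerivAt (fun y : ℝ => Real.sinh (Real.sqrt aK * y))
      (Real.cosh (Real.sqrt aK * x) * Real.sqrt aK) x :=
    (Real.hasDerivAt_sinh (Real.sqrt aK * x)).comp x ha
  have h2 : HasDerivAt (fun y : ℝ => Real.sin (Real.sqrt bK * y))
      (Real.cos (Real.sqrt bK * x) * Real.sqrt bK) x :=
    (Real.hasDerivAt_sin (Real.sqrt bK * x)).comp x hb
  have h3 := (h1.const_mul (1 / (Real.sqrt aK * (aK + bK)))).sub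
    (h2.const_mul (1 / (Real.sqrt bK * (aK + bK))))
  refine HasDerivAt.congr_deriv h3 ?_
  have hsa : Real.sqrt aK ≠ 0 := (Real.sqrt_pos.mpr aK_pos).ne'
  have hsb : Real.sqrt bK ≠ 0 := (Real.sqrt_pos.mpr bK_pos).ne'
  have h5 : Real.sqrt 5 ≠ 0 := by positivity
  rw [abK]
  field_simp

lemma f0_diff : Differentiable ℝ f₀ := fun x => (f0_hasDeriv x).differentiableAt

lemma f0_deriv_eq : deriv f₀ = fun x =>
    (Real.cosh (Real.sqrt aK * x) - Real.cos (Real.sqrt bK * x)) / Real.sqrt 5 :=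
  funext fun x => (f0_hasDeriv x).deriv

lemma f0_deriv_cont : Continuous (deriv f₀) := by
  rw [f0_deriv_eq]; fun_prop

lemma exp_three_half : Real.exp 1.5 ≤ 4.49 := by
  have h1 : Real.exp 1 < 2.7182818286 := Real.exp_one_lt_d9
  have h3 : Real.exp 3 = Real.exp 1 * Real.exp 1 * Real.exp 1 := by
    rw [← Real.exp_add, ← Real.exp_add]; norm_num
  have h15 : Real.exp 1.5 * Real.exp 1.5 = Real.exp 3 := by
    rw [← Real.exp_add]; norm_num
  nlinarith [Real.exp_pos (1.5 : ℝ), Real.exp_pos (1 : ℝ)]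

lemma f0_deriv_bound {s : ℝ} (h1 : -1 ≤ s) (h2 : s ≤ 0) : |deriv f₀ s| ≤ 1 := by
  rw [f0_deriv_eq]
  have hsb2 : (Real.sqrt bK) ^ 2 = bK := Real.sq_sqrt bK_pos.le
  have hs2 : s ^ 2 ≤ 1 := by nlinarith
  have hcos : (0.68 : ℝ) ≤ Real.cos (Real.sqrt bK * s) := by
    have := Real.one_sub_sq_div_two_le_cos (x := Real.sqrt bK * s)
    have hq : (Real.sqrt bK * s) ^ 2 ≤ 0.62 := by
      have he : (Real.sqrt bK * s) ^ 2 = bK * s ^ 2 := by rw [mul_pow, hsb2]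
      rw [he]
      nlinarith [bK_le, bK_pos, sq_nonneg s]
    linarith
  have hcos1 : Real.cos (Real.sqrt bK * s) ≤ 1 := Real.cos_le_one _
  have hch1 : 1 ≤ Real.cosh (Real.sqrt aK * s) := Real.one_le_cosh _
  have hA1 : Real.sqrt aK * s ≤ 0 := mul_nonpos_of_nonneg_of_nonpos (Real.sqrt_nonneg _) h2
  have hA2 : -(1.5 : ℝ) ≤ Real.sqrt aK * s := by nlinarith [sqrt_aK_le, Real.sqrt_nonneg aK]
  have hchu : Real.cosh (Real.sqrt aK * s) ≤ 2.75 := by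
    rw [Real.cosh_eq]
    have he1 : Real.exp (Real.sqrt aK * s) ≤ 1 := by
      rw [show (1:ℝ) = Real.exp 0 from (Real.exp_zero).symm]
      exact Real.exp_le_exp.mpr hA1
    have he2 : Real.exp (-(Real.sqrt aK * s)) ≤ 4.49 := by
      refine le_trans (Real.exp_le_exp.mpr ?_) exp_three_half
      linarith
    linarith
  have h5 : (0:ℝ) < Real.sqrt 5 := by nlinarith [s5_gt]
  rw [abs_div, abs_of_nonneg (by linarith :
      (0:ℝ) ≤ Real.cosh (Real.sqrt aK * s) - Real.cos (Real.sqrt bK * s)),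
    abs_of_nonneg h5.le, div_le_one h5]
  nlinarith [s5_gt]

lemma fac_aux2 (m : ℕ) (hm1 : 1 ≤ m) : (6:ℝ) * (Nat.factorial m) ≤ (Nat.factorial (m+2)) := by
  have h : 6 * Nat.factorial m ≤ Nat.factorial (m+2) := by
    calc 6 * Nat.factorial m ≤ ((m+2)*(m+1)) * Nat.factorial m :=
          Nat.mul_le_mul_right _ (by nlinarith)
      _ = Nat.factorial (m+2) := by rw [Nat.factorial_succ, Nat.factorial_succ]; ring
  exact_mod_cast h

lemma fac_aux4 (m : ℕ) (hm1 : 1 ≤ m) : (120:ℝ) * (Nat.factorial m) ≤ (Nat.factorial (m+4)) := by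
  have h : 120 * Nat.factorial m ≤ Nat.factorial (m+4) := by
    calc 120 * Nat.factorial m ≤ ((m+4)*((m+3)*((m+2)*(m+1)))) * Nat.factorial m := by
          refine Nat.mul_le_mul_right _ ?_
          have h1 : 2 ≤ m+1 := by omega
          have h2 : 3 ≤ m+2 := by omega
          have h3 : 4 ≤ m+3 := by omega
          have h4 : 5 ≤ m+4 := by omega
          calc 120 = 5*(4*(3*2)) := by norm_num
            _ ≤ (m+4)*((m+3)*((m+2)*(m+1))) :=
                Nat.mul_le_mul h4 (Nat.mul_le_mul h3 (Nat.mul_le_mul h2 h1))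
      _ = Nat.factorial (m+4) := by
          rw [Nat.factorial_succ, Nat.factorial_succ, Nat.factorial_succ, Nat.factorial_succ]
          ring
  exact_mod_cast h

/-! ### Main theorem -/

set_option maxHeartbeats 2000000 in
theorem fj_pointwise_bound (f : ℕ → ℝ → ℝ)
    (hsm : ∀ j, ContDiff ℝ (⊤ : ℕ∞) (f j))
    (hf0 : f 0 = f₀)
    (hode : ∀ j, 1 ≤ j → ∀ x ∈ Set.Icc (-1 : ℝ) 0,
      deriv (f j) x + iteratedDeriv 3 (f j) x - iteratedDeriv 5 (f j) x = -(f (j - 1) x))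
    (hbc : ∀ j, 1 ≤ j → f j 0 = 0 ∧ deriv (f j) 0 = 0 ∧ iteratedDeriv 2 (f j) 0 = 0 ∧
      iteratedDeriv 3 (f j) 0 = 0 ∧ iteratedDeriv 4 (f j) 0 = 0) :
    ∀ j : ℕ, ∀ x ∈ Set.Icc (-1 : ℝ) 0,
      |f j x| ≤ 2 ^ j * |x| ^ (5 * j + 1) / (Nat.factorial (5 * j + 1)) := by
  intro j
  induction j with
  | zero =>
    intro x hx
    rw [hf0]
    have h00 : f₀ 0 = 0 := by simp [f₀]
    have hb : ∀ s ∈ Set.Icc x 0, |deriv f₀ s| ≤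
        (1:ℝ) * (-s) ^ 0 / (Nat.factorial 0) + 0 * (-s) ^ 0 / (Nat.factorial 0) := by
      intro s hs
      simpa using f0_deriv_bound (le_trans hx.1 hs.1) hs.2
    have hst := step_int f₀ f0_diff f0_deriv_cont h00 0 0 hx.2 hb
    rw [abs_of_nonpos hx.2]
    simpa using hst
  | succ j ihj =>
    intro x hx
    have hsmh : ContDiff ℝ (⊤ : ℕ∞) (f (j+1)) := (hsm (j+1)).of_le (mod_cast le_top)
    have hbc' := hbc (j+1) (by omega)
    obtain ⟨m, hm⟩ : ∃ m, m = 5*j+1 := ⟨_, rfl⟩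
    obtain ⟨C, hC⟩ : ∃ C : ℝ, C = 2^j := ⟨_, rfl⟩
    rw [← hm, ← hC] at ihj
    have hm1 : 1 ≤ m := by omega
    have hCpos : (0:ℝ) < C := by rw [hC]; positivity
    have hFpos : (0:ℝ) < (Nat.factorial m : ℝ) := by exact_mod_cast Nat.factorial_pos m
    have hode' : ∀ y ∈ Set.Icc (-1:ℝ) 0, iteratedDeriv 5 (f (j+1)) y
        = iteratedDeriv 1 (f (j+1)) y + iteratedDeriv 3 (f (j+1)) y + f j y := by
      intro y hy
      have h := hode (j+1) (by omega) y hy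
      simp only [Nat.add_sub_cancel] at h
      rw [iteratedDeriv_one]
      linarith
    have hb0 : ∀ k < 5, iteratedDeriv k (f (j+1)) 0 = 0 := by
      intro k hk
      interval_cases k
      · simpa using hbc'.1
      · rw [iteratedDeriv_one]; exact hbc'.2.1
      · exact hbc'.2.2.1
      · exact hbc'.2.2.2.1
      · exact hbc'.2.2.2.2
    have hu : ∀ s ∈ Set.Icc (-1:ℝ) 0, |f j s| ≤ C * (-s) ^ m / (Nat.factorial m) := by
      intro s hs
      have h := ihj s hs
      rwa [abs_of_nonpos hs.2] at h
    obtain ⟨K, hK⟩ : ∃ K, ∀ y ∈ Set.Icc (-1:ℝ) 0, |iteratedDeriv 5 (f (j+1)) y| ≤ K := by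
      obtain ⟨K, hK⟩ := (isCompact_Icc (a := (-1:ℝ)) (b := 0)).exists_bound_of_continuousOn
        ((contDiff_top_iteratedDeriv 5 _ hsmh).continuous.continuousOn)
      exact ⟨K, fun y hy => by simpa using hK y hy⟩
    have hK0 : 0 ≤ K :=
      le_trans (abs_nonneg _) (hK 0 (Set.mem_Icc.mpr (by norm_num)))
    have hfac2 : (6:ℝ) * (Nat.factorial m) ≤ (Nat.factorial (m+2)) := fac_aux2 m hm1
    have hfac4 : (120:ℝ) * (Nat.factorial m) ≤ (Nat.factorial (m+4)) := fac_aux4 m hm1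
    have key : ∀ N : ℕ, ∀ y ∈ Set.Icc (-1:ℝ) 0, |iteratedDeriv 5 (f (j+1)) y| ≤
        (C * (2 - 2*(1/2:ℝ)^N)) * (-y) ^ m / (Nat.factorial m)
          + ((13/24:ℝ)^N * K) * (-y) ^ 0 / (Nat.factorial 0) := by
      intro N
      induction N with
      | zero =>
        intro y hy
        have h := hK y hy
        norm_num
        linarith
      | succ N ihN =>
        intro y hy
        obtain ⟨D, hD⟩ : ∃ D : ℝ, D = C * (2 - 2*(1/2:ℝ)^N) := ⟨_, rfl⟩
        obtain ⟨E, hE⟩ : ∃ E : ℝ, E = (13/24:ℝ)^N * K := ⟨_, rfl⟩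
        rw [← hD, ← hE] at ihN
        have hhalf : (1/2:ℝ)^N ≤ 1 := pow_le_one₀ (by norm_num) (by norm_num)
        have hDnn : 0 ≤ D := by
          rw [hD]; nlinarith [hCpos.le]
        have hEnn : 0 ≤ E := by rw [hE]; positivity
        have h1b := iter_step 4 (iteratedDeriv 1 (f (j+1))) (contDiff_top_iteratedDeriv 1 _ hsmh)
          (fun k hk => by
            rw [iteratedDeriv_iteratedDeriv]
            exact hb0 (k+1) (by omega))
          D E m 0
          (fun s hs => by
            rw [iteratedDeriv_iteratedDeriv]
            exact ihN s hs)
        have h3b := iter_step 2 (iteratedDeriv 3 (f (j+1))) (contDiff_top_iteratedDeriv 3 _ hsmh)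
          (fun k hk => by
            rw [iteratedDeriv_iteratedDeriv]
            exact hb0 (k+3) (by omega))
          D E m 0
          (fun s hs => by
            rw [iteratedDeriv_iteratedDeriv]
            exact ihN s hs)
        have hy1 : 0 ≤ -y := by linarith [hy.2]
        have hy2 : -y ≤ 1 := by linarith [hy.1]
        have ht4 : (-y) ^ (m+4) ≤ (-y) ^ m := pow_le_pow_of_le_one hy1 hy2 (by omega)
        have ht2 : (-y) ^ (m+2) ≤ (-y) ^ m := pow_le_pow_of_le_one hy1 hy2 (by omega)
        have htm : 0 ≤ (-y) ^ m := pow_nonneg hy1 m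
        have h04 : (-y) ^ (0+4) ≤ 1 := pow_le_one₀ hy1 hy2
        have h02 : (-y) ^ (0+2) ≤ 1 := pow_le_one₀ hy1 hy2
        have e1 := h1b y hy
        have e3 := h3b y hy
        have eu := hu y hy
        have q1 : D * (-y) ^ (m+4) / (Nat.factorial (m+4))
            ≤ D * (-y) ^ m / (Nat.factorial m) / 120 := by
          rw [div_div]
          exact div_le_div₀ (mul_nonneg hDnn htm) (mul_le_mul_of_nonneg_left ht4 hDnn)
            (by positivity) (by linarith)
        have q2 : D * (-y) ^ (m+2) / (Nat.factorial (m+2))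
            ≤ D * (-y) ^ m / (Nat.factorial m) / 6 := by
          rw [div_div]
          exact div_le_div₀ (mul_nonneg hDnn htm) (mul_le_mul_of_nonneg_left ht2 hDnn)
            (by positivity) (by linarith)
        have q3 : E * (-y) ^ (0+4) / (Nat.factorial (0+4)) ≤ E / 24 := by
          have hEy : E * (-y) ^ (0+4) ≤ E := by nlinarith
          have h24 : ((Nat.factorial (0+4) : ℝ)) = 24 := by norm_num [Nat.factorial]
          rw [h24]
          exact (div_le_div_iff_of_pos_right (by norm_num)).mpr hEy
        have q4 : E * (-y) ^ (0+2) / (Nat.factorial (0+2)) ≤ E / 2 := by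
          have hEy : E * (-y) ^ (0+2) ≤ E := by nlinarith
          have h2f : ((Nat.factorial (0+2) : ℝ)) = 2 := by norm_num [Nat.factorial]
          rw [h2f]
          exact (div_le_div_iff_of_pos_right (by norm_num)).mpr hEy
        have htri : |iteratedDeriv 1 (f (j+1)) y + iteratedDeriv 3 (f (j+1)) y + f j y| ≤
            |iteratedDeriv 1 (f (j+1)) y| + |iteratedDeriv 3 (f (j+1)) y| + |f j y| :=
          abs_add_three _ _ _
        rw [hode' y hy]
        have hrhs : (C * (2 - 2*(1/2:ℝ)^(N+1))) * (-y) ^ m / (Nat.factorial m)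
            + ((13/24:ℝ)^(N+1) * K) * (-y) ^ 0 / (Nat.factorial 0)
            = C * (-y) ^ m / (Nat.factorial m) + (D * (-y) ^ m / (Nat.factorial m))/2
              + (13/24) * E := by
          rw [hD, hE, pow_succ, pow_succ]
          simp only [pow_zero, Nat.factorial_zero, Nat.cast_one, mul_one, div_one]
          ring
        rw [hrhs]
        have hq : D * (-y) ^ m / (Nat.factorial m) / 120 + D * (-y) ^ m / (Nat.factorial m) / 6
            ≤ (D * (-y) ^ m / (Nat.factorial m))/2 := by
          have hnn : 0 ≤ D * (-y) ^ m / (Nat.factorial m) :=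
            div_nonneg (mul_nonneg hDnn htm) hFpos.le
          linarith
        linarith [htri, e1, e3, eu, q1, q2, q3, q4]
    have hvb : ∀ y ∈ Set.Icc (-1:ℝ) 0, |iteratedDeriv 5 (f (j+1)) y| ≤
        (2*C) * (-y) ^ m / (Nat.factorial m) + 0 * (-y) ^ 0 / (Nat.factorial 0) := by
      intro y hy
      have hy1 : 0 ≤ -y := by linarith [hy.2]
      have htm : 0 ≤ (-y) ^ m := pow_nonneg hy1 m
      have hper : ∀ N : ℕ, |iteratedDeriv 5 (f (j+1)) y| ≤
          2*C * (-y) ^ m / (Nat.factorial m) + (13/24:ℝ)^N * K := by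
        intro N
        have hk := key N y hy
        have hhalf : (0:ℝ) ≤ (1/2:ℝ)^N := by positivity
        have hnum : (C * (2 - 2*(1/2:ℝ)^N)) * (-y) ^ m ≤ 2*C*(-y) ^ m := by
          nlinarith [mul_nonneg (mul_nonneg hCpos.le hhalf) htm]
        have hc1 : (C * (2 - 2*(1/2:ℝ)^N)) * (-y) ^ m / (Nat.factorial m)
            ≤ 2*C*(-y) ^ m / (Nat.factorial m) := (div_le_div_iff_of_pos_right hFpos).mpr hnum
        simp only [pow_zero, Nat.factorial_zero, Nat.cast_one, mul_one, div_one] at hk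
        linarith
      have hlim : Filter.Tendsto (fun N : ℕ => 2*C*(-y) ^ m / (Nat.factorial m) + (13/24:ℝ)^N * K)
          Filter.atTop (nhds (2*C*(-y) ^ m / (Nat.factorial m) + 0)) :=
        tendsto_const_nhds.add
          (by simpa using
            (tendsto_pow_atTop_nhds_zero_of_lt_one (by norm_num : (0:ℝ) ≤ 13/24)
              (by norm_num)).mul_const K)
      have hle := ge_of_tendsto' hlim hper
      simpa using hle
    have hfinal := iter_step 5 (f (j+1)) hsmh hb0 (2*C) 0 m 0 hvb x hx
    rw [abs_of_nonpos hx.2]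
    have hidx : 5*(j+1)+1 = m+5 := by omega
    rw [hidx]
    have h2C : (2:ℝ)^(j+1) = 2*C := by rw [hC, pow_succ]; ring
    rw [h2C]
    simpa using hfinal
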